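/- arXiv:1810.11088 — 4 statements merged into one kernel-verified Lean document; each statement's English description precedes it below -/
import Mathlib

section
/- Let $n\ge 3$ and let $f$ be a symmetric 4-tensor on $\mathbb{R}^n$ decomposed into components $(f_{xxxx}, f_{xxxy}, f_{xxyy}, f_{xyyy}, f_{yyyy})$, where $f_{xxxy}$ is a vector in $\mathbb{R}^{n-1}$, $f_{xxyy}$ a symmetric 2-tensor, $f_{xyyy}$ a symmetric 3-tensor, and $f_{yyyy}$ a symmetric 4-tensor on $\mathbb{R}^{n-1}$. Fix $(\xi,\eta)\in\mathbb{R}\times\mathbb{R}^{n-1}$ with $\xi\ne 0$. Suppose: (i) $\xi f_{xxxx}+\langle\eta,f_{xxxy}\rangle=0$, $\xi f_{xxxy}+\iota_\eta f_{xxyy}=0$, $\xi f_{xxyy}+\iota_\eta f_{xyyy}=0$, $\xi f_{xyyy}+\iota_\eta f_{yyyy}=0$ (contractions in one slot); and (ii) for every unit vector $\hat Y\in\mathbb{R}^{n-1}$, setting $\tilde S=-\hat Y\cdot\eta/\xi$, one has $\tilde S^4 f_{xxxx}+4\tilde S^3\langle\hat Y,f_{xxxy}\rangle+6\tilde S^2\langle\hat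 Y^{\otimes 2},f_{xxyy}\rangle+4\tilde S\langle\hat Y^{\otimes 3},f_{xyyy}\rangle+\langle\hat Y^{\otimes 4},f_{yyyy}\rangle=0$. Then $f=0$. -/
open Finset


namespace S0

variable {m : ℕ}

def K1 (g A : Fin m → ℝ) : ℝ := ∑ a, A a * g a
def K2 (g : Fin m → Fin m → ℝ) (A B : Fin m → ℝ) : ℝ := ∑ a, ∑ b, A a * B b * g a b
def K3 (g : Fin m → Fin m → Fin m → ℝ) (A B C : Fin m → ℝ) : ℝ :=
  ∑ a, ∑ b, ∑ c, A a * B b * C c * g a b c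
def K4 (g : Fin m → Fin m → Fin m → Fin m → ℝ) (A B C D : Fin m → ℝ) : ℝ :=
  ∑ a, ∑ b, ∑ c, ∑ d, A a * B b * C c * D d * g a b c d

lemma K1_addsmul (g A Z : Fin m → ℝ) (t : ℝ) :
    K1 g (fun i => A i + t * Z i) = K1 g A + t * K1 g Z := by
  unfold K1
  rw [Finset.mul_sum, ← Finset.sum_add_distrib]
  exact Finset.sum_congr rfl fun a _ => by ring

lemma K2_addsmul1 (g : Fin m → Fin m → ℝ) (A Z B : Fin m → ℝ) (t : ℝ) :
    K2 g (fun i => A i + t * Z i) B = K2 g A B + t * K2 g Z B := by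
  unfold K2
  rw [Finset.mul_sum, ← Finset.sum_add_distrib]
  refine Finset.sum_congr rfl fun a _ => ?_
  rw [Finset.mul_sum, ← Finset.sum_add_distrib]
  exact Finset.sum_congr rfl fun b _ => by ring

lemma K2_addsmul2 (g : Fin m → Fin m → ℝ) (A B Z : Fin m → ℝ) (t : ℝ) :
    K2 g A (fun i => B i + t * Z i) = K2 g A B + t * K2 g A Z := by
  unfold K2
  rw [Finset.mul_sum, ← Finset.sum_add_distrib]
  refine Finset.sum_congr rfl fun a _ => ?_
  rw [Finset.mul_sum, ← Finset.sum_add_distrib]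
  exact Finset.sum_congr rfl fun b _ => by ring

lemma K3_addsmul1 (g : Fin m → Fin m → Fin m → ℝ) (A Z B C : Fin m → ℝ) (t : ℝ) :
    K3 g (fun i => A i + t * Z i) B C = K3 g A B C + t * K3 g Z B C := by
  unfold K3
  rw [Finset.mul_sum, ← Finset.sum_add_distrib]
  refine Finset.sum_congr rfl fun a _ => ?_
  rw [Finset.mul_sum, ← Finset.sum_add_distrib]
  refine Finset.sum_congr rfl fun b _ => ?_
  rw [Finset.mul_sum, ← Finset.sum_add_distrib]
  exact Finset.sum_congr rfl fun c _ => by ring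

lemma K3_addsmul2 (g : Fin m → Fin m → Fin m → ℝ) (A B Z C : Fin m → ℝ) (t : ℝ) :
    K3 g A (fun i => B i + t * Z i) C = K3 g A B C + t * K3 g A Z C := by
  unfold K3
  rw [Finset.mul_sum, ← Finset.sum_add_distrib]
  refine Finset.sum_congr rfl fun a _ => ?_
  rw [Finset.mul_sum, ← Finset.sum_add_distrib]
  refine Finset.sum_congr rfl fun b _ => ?_
  rw [Finset.mul_sum, ← Finset.sum_add_distrib]
  exact Finset.sum_congr rfl fun c _ => by ring

lemma K3_addsmul3 (g : Fin m → Fin m → Fin m → ℝ) (A B C Z : Fin m → ℝ) (t : ℝ) :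
    K3 g A B (fun i => C i + t * Z i) = K3 g A B C + t * K3 g A B Z := by
  unfold K3
  rw [Finset.mul_sum, ← Finset.sum_add_distrib]
  refine Finset.sum_congr rfl fun a _ => ?_
  rw [Finset.mul_sum, ← Finset.sum_add_distrib]
  refine Finset.sum_congr rfl fun b _ => ?_
  rw [Finset.mul_sum, ← Finset.sum_add_distrib]
  exact Finset.sum_congr rfl fun c _ => by ring

lemma K4_addsmul1 (g : Fin m → Fin m → Fin m → Fin m → ℝ) (A Z B C D : Fin m → ℝ) (t : ℝ) :
    K4 g (fun i => A i + t * Z i) B C D = K4 g A B C D + t * K4 g Z B C D := by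
  unfold K4
  rw [Finset.mul_sum, ← Finset.sum_add_distrib]
  refine Finset.sum_congr rfl fun a _ => ?_
  rw [Finset.mul_sum, ← Finset.sum_add_distrib]
  refine Finset.sum_congr rfl fun b _ => ?_
  rw [Finset.mul_sum, ← Finset.sum_add_distrib]
  refine Finset.sum_congr rfl fun c _ => ?_
  rw [Finset.mul_sum, ← Finset.sum_add_distrib]
  exact Finset.sum_congr rfl fun d _ => by ring

lemma K4_addsmul2 (g : Fin m → Fin m → Fin m → Fin m → ℝ) (A B Z C D : Fin m → ℝ) (t : ℝ) :
    K4 g A (fun i => B i + t * Z i) C D = K4 g A B C D + t * K4 g A Z C D := by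
  unfold K4
  rw [Finset.mul_sum, ← Finset.sum_add_distrib]
  refine Finset.sum_congr rfl fun a _ => ?_
  rw [Finset.mul_sum, ← Finset.sum_add_distrib]
  refine Finset.sum_congr rfl fun b _ => ?_
  rw [Finset.mul_sum, ← Finset.sum_add_distrib]
  refine Finset.sum_congr rfl fun c _ => ?_
  rw [Finset.mul_sum, ← Finset.sum_add_distrib]
  exact Finset.sum_congr rfl fun d _ => by ring

lemma K4_addsmul3 (g : Fin m → Fin m → Fin m → Fin m → ℝ) (A B C Z D : Fin m → ℝ) (t : ℝ) :
    K4 g A B (fun i => C i + t * Z i) D = K4 g A B C D + t * K4 g A B Z D := by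
  unfold K4
  rw [Finset.mul_sum, ← Finset.sum_add_distrib]
  refine Finset.sum_congr rfl fun a _ => ?_
  rw [Finset.mul_sum, ← Finset.sum_add_distrib]
  refine Finset.sum_congr rfl fun b _ => ?_
  rw [Finset.mul_sum, ← Finset.sum_add_distrib]
  refine Finset.sum_congr rfl fun c _ => ?_
  rw [Finset.mul_sum, ← Finset.sum_add_distrib]
  exact Finset.sum_congr rfl fun d _ => by ring

lemma K4_addsmul4 (g : Fin m → Fin m → Fin m → Fin m → ℝ) (A B C D Z : Fin m → ℝ) (t : ℝ) :
    K4 g A B C (fun i => D i + t * Z i) = K4 g A B C D + t * K4 g A B C Z := by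
  unfold K4
  rw [Finset.mul_sum, ← Finset.sum_add_distrib]
  refine Finset.sum_congr rfl fun a _ => ?_
  rw [Finset.mul_sum, ← Finset.sum_add_distrib]
  refine Finset.sum_congr rfl fun b _ => ?_
  rw [Finset.mul_sum, ← Finset.sum_add_distrib]
  refine Finset.sum_congr rfl fun c _ => ?_
  rw [Finset.mul_sum, ← Finset.sum_add_distrib]
  exact Finset.sum_congr rfl fun d _ => by ring

lemma K1_smul (g A : Fin m → ℝ) (t : ℝ) :
    K1 g (fun i => t * A i) = t * K1 g A := by
  unfold K1; rw [Finset.mul_sum]; exact Finset.sum_congr rfl fun a _ => by ring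

lemma K2_smul (g : Fin m → Fin m → ℝ) (A B : Fin m → ℝ) (s t : ℝ) :
    K2 g (fun i => s * A i) (fun i => t * B i) = s * t * K2 g A B := by
  unfold K2
  rw [Finset.mul_sum]
  refine Finset.sum_congr rfl fun a _ => ?_
  rw [Finset.mul_sum]
  exact Finset.sum_congr rfl fun b _ => by ring

lemma K3_smul (g : Fin m → Fin m → Fin m → ℝ) (A B C : Fin m → ℝ) (s t u : ℝ) :
    K3 g (fun i => s * A i) (fun i => t * B i) (fun i => u * C i) = s * t * u * K3 g A B C := by
  unfold K3
  rw [Finset.mul_sum]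
  refine Finset.sum_congr rfl fun a _ => ?_
  rw [Finset.mul_sum]
  refine Finset.sum_congr rfl fun b _ => ?_
  rw [Finset.mul_sum]
  exact Finset.sum_congr rfl fun c _ => by ring

lemma K4_smul (g : Fin m → Fin m → Fin m → Fin m → ℝ) (A B C D : Fin m → ℝ) (s t u v : ℝ) :
    K4 g (fun i => s * A i) (fun i => t * B i) (fun i => u * C i) (fun i => v * D i)
      = s * t * u * v * K4 g A B C D := by
  unfold K4
  rw [Finset.mul_sum]
  refine Finset.sum_congr rfl fun a _ => ?_
  rw [Finset.mul_sum]
  refine Finset.sum_congr rfl fun b _ => ?_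
  rw [Finset.mul_sum]
  refine Finset.sum_congr rfl fun c _ => ?_
  rw [Finset.mul_sum]
  exact Finset.sum_congr rfl fun d _ => by ring

lemma K2_swap (g : Fin m → Fin m → ℝ) (hg : ∀ a b, g a b = g b a) (A B : Fin m → ℝ) :
    K2 g A B = K2 g B A := by
  unfold K2
  rw [Finset.sum_comm]
  refine Finset.sum_congr rfl fun a _ => Finset.sum_congr rfl fun b _ => ?_
  rw [hg]; ring

lemma K3_swap12 (g : Fin m → Fin m → Fin m → ℝ) (hg : ∀ a b c, g a b c = g b a c)
    (A B C : Fin m → ℝ) : K3 g A B C = K3 g B A C := by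
  unfold K3
  rw [Finset.sum_comm]
  refine Finset.sum_congr rfl fun a _ => Finset.sum_congr rfl fun b _ =>
    Finset.sum_congr rfl fun c _ => ?_
  rw [hg]; ring

lemma K3_swap23 (g : Fin m → Fin m → Fin m → ℝ) (hg : ∀ a b c, g a b c = g a c b)
    (A B C : Fin m → ℝ) : K3 g A B C = K3 g A C B := by
  unfold K3
  refine Finset.sum_congr rfl fun a _ => ?_
  rw [Finset.sum_comm]
  refine Finset.sum_congr rfl fun b _ => Finset.sum_congr rfl fun c _ => ?_
  rw [hg]; ring

lemma K4_swap12 (g : Fin m → Fin m → Fin m → Fin m → ℝ)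
    (hg : ∀ a b c d, g a b c d = g b a c d) (A B C D : Fin m → ℝ) :
    K4 g A B C D = K4 g B A C D := by
  unfold K4
  rw [Finset.sum_comm]
  refine Finset.sum_congr rfl fun a _ => Finset.sum_congr rfl fun b _ =>
    Finset.sum_congr rfl fun c _ => Finset.sum_congr rfl fun d _ => ?_
  rw [hg]; ring

lemma K4_swap23 (g : Fin m → Fin m → Fin m → Fin m → ℝ)
    (hg : ∀ a b c d, g a b c d = g a c b d) (A B C D : Fin m → ℝ) :
    K4 g A B C D = K4 g A C B D := by
  unfold K4
  refine Finset.sum_congr rfl fun a _ => ?_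
  rw [Finset.sum_comm]
  refine Finset.sum_congr rfl fun b _ => Finset.sum_congr rfl fun c _ =>
    Finset.sum_congr rfl fun d _ => ?_
  rw [hg]; ring

lemma K4_swap34 (g : Fin m → Fin m → Fin m → Fin m → ℝ)
    (hg : ∀ a b c d, g a b c d = g a b d c) (A B C D : Fin m → ℝ) :
    K4 g A B C D = K4 g A B D C := by
  unfold K4
  refine Finset.sum_congr rfl fun a _ => Finset.sum_congr rfl fun b _ => ?_
  rw [Finset.sum_comm]
  refine Finset.sum_congr rfl fun c _ => Finset.sum_congr rfl fun d _ => ?_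
  rw [hg]; ring


lemma K2_expand (g : Fin m → Fin m → ℝ) (hg : ∀ a b, g a b = g b a)
    (Y Z : Fin m → ℝ) (t : ℝ) :
    K2 g (fun i => Y i + t * Z i) (fun i => Y i + t * Z i)
      = K2 g Y Y + t * (2 * K2 g Z Y) + t ^ 2 * K2 g Z Z := by
  rw [K2_addsmul1, K2_addsmul2, K2_addsmul2]
  have e1 : K2 g Y Z = K2 g Z Y := K2_swap g hg Y Z
  linear_combination t * e1

lemma K3_expand (g : Fin m → Fin m → Fin m → ℝ)
    (hg12 : ∀ a b c, g a b c = g b a c) (hg23 : ∀ a b c, g a b c = g a c b)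
    (Y Z : Fin m → ℝ) (t : ℝ) :
    K3 g (fun i => Y i + t * Z i) (fun i => Y i + t * Z i) (fun i => Y i + t * Z i)
      = K3 g Y Y Y + t * (3 * K3 g Z Y Y) + t ^ 2 * (3 * K3 g Z Z Y)
        + t ^ 3 * K3 g Z Z Z := by
  rw [K3_addsmul1, K3_addsmul2, K3_addsmul2, K3_addsmul3, K3_addsmul3, K3_addsmul3,
    K3_addsmul3]
  have e1 : K3 g Y Z Y = K3 g Z Y Y := K3_swap12 g hg12 Y Z Y
  have e2 : K3 g Y Y Z = K3 g Z Y Y := (K3_swap23 g hg23 Y Y Z).trans e1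
  have e3 : K3 g Y Z Z = K3 g Z Z Y :=
    (K3_swap12 g hg12 Y Z Z).trans (K3_swap23 g hg23 Z Y Z)
  have e4 : K3 g Z Y Z = K3 g Z Z Y := K3_swap23 g hg23 Z Y Z
  linear_combination t * e1 + t * e2 + t ^ 2 * e3 + t ^ 2 * e4

lemma K4_expand (g : Fin m → Fin m → Fin m → Fin m → ℝ)
    (hg12 : ∀ a b c d, g a b c d = g b a c d)
    (hg23 : ∀ a b c d, g a b c d = g a c b d)
    (hg34 : ∀ a b c d, g a b c d = g a b d c)
    (Y Z : Fin m → ℝ) (t : ℝ) :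
    K4 g (fun i => Y i + t * Z i) (fun i => Y i + t * Z i) (fun i => Y i + t * Z i)
        (fun i => Y i + t * Z i)
      = K4 g Y Y Y Y + t * (4 * K4 g Z Y Y Y) + t ^ 2 * (6 * K4 g Z Z Y Y)
        + t ^ 3 * (4 * K4 g Z Z Z Y) + t ^ 4 * K4 g Z Z Z Z := by
  rw [K4_addsmul1, K4_addsmul2, K4_addsmul2, K4_addsmul3, K4_addsmul3, K4_addsmul3,
    K4_addsmul3, K4_addsmul4, K4_addsmul4, K4_addsmul4, K4_addsmul4, K4_addsmul4,
    K4_addsmul4, K4_addsmul4, K4_addsmul4]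
  have s12 := K4_swap12 g hg12
  have s23 := K4_swap23 g hg23
  have s34 := K4_swap34 g hg34
  have e1 : K4 g Y Z Y Y = K4 g Z Y Y Y := s12 Y Z Y Y
  have e2 : K4 g Y Y Z Y = K4 g Z Y Y Y := (s23 Y Y Z Y).trans e1
  have e3 : K4 g Y Y Y Z = K4 g Z Y Y Y := (s34 Y Y Y Z).trans e2
  have f1 : K4 g Z Y Z Y = K4 g Z Z Y Y := s23 Z Y Z Y
  have f2 : K4 g Z Y Y Z = K4 g Z Z Y Y := (s34 Z Y Y Z).trans f1
  have f3 : K4 g Y Z Z Y = K4 g Z Z Y Y := (s12 Y Z Z Y).trans f1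
  have f4 : K4 g Y Z Y Z = K4 g Z Z Y Y := (s12 Y Z Y Z).trans f2
  have f5 : K4 g Y Y Z Z = K4 g Z Z Y Y := (s23 Y Y Z Z).trans f4
  have g2 : K4 g Z Z Y Z = K4 g Z Z Z Y := s34 Z Z Y Z
  have g1 : K4 g Z Y Z Z = K4 g Z Z Z Y := (s23 Z Y Z Z).trans g2
  have g0 : K4 g Y Z Z Z = K4 g Z Z Z Y := (s12 Y Z Z Z).trans g1
  linear_combination t * e1 + t * e2 + t * e3 + t ^ 2 * (f1 + f2 + f3 + f4 + f5)
    + t ^ 3 * (g0 + g1 + g2)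

lemma quartic_coeffs (c0 c1 c2 c3 c4 : ℝ)
    (h : ∀ t : ℝ, c0 + c1 * t + c2 * t ^ 2 + c3 * t ^ 3 + c4 * t ^ 4 = 0) :
    c0 = 0 ∧ c1 = 0 ∧ c2 = 0 ∧ c3 = 0 ∧ c4 = 0 := by
  have h0 := h 0
  have ha := h 1
  have hb := h (-1)
  have hc := h 2
  have hd := h (-2)
  norm_num at h0 ha hb hc hd
  refine ⟨h0, by linarith, by linarith, by linarith, by linarith⟩

lemma ind1 (g : Fin m → ℝ) (h : ∀ A, K1 g A = 0) (a : Fin m) : g a = 0 := by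
  have := h (fun i => if i = a then 1 else 0)
  unfold K1 at this
  simpa using this

lemma red21 (g : Fin m → Fin m → ℝ) (Z B : Fin m → ℝ) :
    K2 g Z B = K1 (fun b => K1 (fun a => g a b) Z) B := by
  unfold K2 K1
  rw [Finset.sum_comm]
  refine Finset.sum_congr rfl fun b _ => ?_
  rw [Finset.mul_sum]
  exact Finset.sum_congr rfl fun a _ => by ring

lemma red32 (g : Fin m → Fin m → Fin m → ℝ) (Z B C : Fin m → ℝ) :
    K3 g Z B C = K2 (fun b c => K1 (fun a => g a b c) Z) B C := by
  unfold K3 K2 K1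
  rw [Finset.sum_comm]
  refine Finset.sum_congr rfl fun b _ => ?_
  rw [Finset.sum_comm]
  refine Finset.sum_congr rfl fun c _ => ?_
  rw [Finset.mul_sum]
  exact Finset.sum_congr rfl fun a _ => by ring

lemma red43 (g : Fin m → Fin m → Fin m → Fin m → ℝ) (Z B C D : Fin m → ℝ) :
    K4 g Z B C D = K3 (fun b c d => K1 (fun a => g a b c d) Z) B C D := by
  unfold K4 K3 K1
  rw [Finset.sum_comm]
  refine Finset.sum_congr rfl fun b _ => ?_
  rw [Finset.sum_comm]
  refine Finset.sum_congr rfl fun c _ => ?_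
  rw [Finset.sum_comm]
  refine Finset.sum_congr rfl fun d _ => ?_
  rw [Finset.mul_sum]
  exact Finset.sum_congr rfl fun a _ => by ring

lemma quad_zero (g : Fin m → Fin m → ℝ) (hg : ∀ a b, g a b = g b a)
    (h : ∀ Y, K2 g Y Y = 0) : ∀ a b, g a b = 0 := by
  have hpol : ∀ Z Y, K2 g Z Y = 0 := by
    intro Z Y
    have he := K2_expand g hg Y Z 1
    rw [h _, h Y, h Z] at he
    linarith [he]
  intro a b
  have key : ∀ Z b', K1 (fun a' => g a' b') Z = 0 := by
    intro Z b'
    have := ind1 (fun b'' => K1 (fun a' => g a' b'') Z)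
      (fun B => by rw [← red21]; exact hpol Z B) b'
    simpa using this
  exact ind1 (fun a' => g a' b) (fun A => key A b) a

lemma cubic_zero (g : Fin m → Fin m → Fin m → ℝ)
    (hg12 : ∀ a b c, g a b c = g b a c) (hg23 : ∀ a b c, g a b c = g a c b)
    (h : ∀ Y, K3 g Y Y Y = 0) : ∀ a b c, g a b c = 0 := by
  have hpol : ∀ Z Y, K3 g Z Y Y = 0 := by
    intro Z Y
    have he1 := K3_expand g hg12 hg23 Y Z 1
    have he2 := K3_expand g hg12 hg23 Y Z (-1)
    rw [h _, h Y, h Z] at he1 he2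
    norm_num at he1 he2
    linarith
  intro a b c
  have hKZ : ∀ Z, ∀ b' c', (fun b'' c'' => K1 (fun a' => g a' b'' c'') Z) b' c'
      = (fun b'' c'' => K1 (fun a' => g a' b'' c'') Z) c' b' := by
    intro Z b' c'
    simp only
    unfold K1
    exact Finset.sum_congr rfl fun a' _ => by show Z a' * g a' b' c' = Z a' * g a' c' b'; rw [hg23]
  have key : ∀ Z b' c', K1 (fun a' => g a' b' c') Z = 0 := by
    intro Z b' c'
    have hq : ∀ Y, K2 (fun b'' c'' => K1 (fun a' => g a' b'' c'') Z) Y Y = 0 := by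
      intro Y; rw [← red32]; exact hpol Z Y
    have := quad_zero (fun b'' c'' => K1 (fun a' => g a' b'' c'') Z) (hKZ Z) hq b' c'
    simpa using this
  exact ind1 (fun a' => g a' b c) (fun A => key A b c) a

lemma quartic_zero (g : Fin m → Fin m → Fin m → Fin m → ℝ)
    (hg12 : ∀ a b c d, g a b c d = g b a c d)
    (hg23 : ∀ a b c d, g a b c d = g a c b d)
    (hg34 : ∀ a b c d, g a b c d = g a b d c)
    (h : ∀ Y, K4 g Y Y Y Y = 0) : ∀ a b c d, g a b c d = 0 := by
  have hpol : ∀ Z Y, K4 g Z Y Y Y = 0 := by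
    intro Z Y
    have he1 := K4_expand g hg12 hg23 hg34 Y Z 1
    have he2 := K4_expand g hg12 hg23 hg34 Y Z (-1)
    have he3 := K4_expand g hg12 hg23 hg34 Y Z 2
    rw [h _, h Y, h Z] at he1 he2 he3
    norm_num at he1 he2 he3
    linarith
  intro a b c d
  have key : ∀ Z b' c' d', K1 (fun a' => g a' b' c' d') Z = 0 := by
    intro Z b' c' d'
    have hc12 : ∀ b'' c'' d'', (fun b0 c0 d0 => K1 (fun a' => g a' b0 c0 d0) Z) b'' c'' d''
        = (fun b0 c0 d0 => K1 (fun a' => g a' b0 c0 d0) Z) c'' b'' d'' := by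
      intro b'' c'' d''; simp only; unfold K1
      exact Finset.sum_congr rfl fun a' _ => by show Z a' * g a' b'' c'' d'' = Z a' * g a' c'' b'' d''; rw [hg23]
    have hc23 : ∀ b'' c'' d'', (fun b0 c0 d0 => K1 (fun a' => g a' b0 c0 d0) Z) b'' c'' d''
        = (fun b0 c0 d0 => K1 (fun a' => g a' b0 c0 d0) Z) b'' d'' c'' := by
      intro b'' c'' d''; simp only; unfold K1
      exact Finset.sum_congr rfl fun a' _ => by show Z a' * g a' b'' c'' d'' = Z a' * g a' b'' d'' c''; rw [hg34]
    have hq : ∀ Y, K3 (fun b0 c0 d0 => K1 (fun a' => g a' b0 c0 d0) Z) Y Y Y = 0 := by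
      intro Y; rw [← red43]; exact hpol Z Y
    have := cubic_zero (fun b0 c0 d0 => K1 (fun a' => g a' b0 c0 d0) Z) hc12 hc23 hq b' c' d'
    simpa using this
  exact ind1 (fun a' => g a' b c d) (fun A => key A b c d) a
end S0


open S0

/-- Case 1 (ξ ≠ 0) ellipticity computation at fiber infinity for the local
geodesic ray transform of symmetric 4-tensors (Lemma 2.2). -/
theorem stmt_0 (n : ℕ) (hn : 3 ≤ n)
    (fxxxx : ℝ) (fxxxy : Fin (n-1) → ℝ)
    (fxxyy : Fin (n-1) → Fin (n-1) → ℝ)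
    (fxyyy : Fin (n-1) → Fin (n-1) → Fin (n-1) → ℝ)
    (fyyyy : Fin (n-1) → Fin (n-1) → Fin (n-1) → Fin (n-1) → ℝ)
    (hsym2 : ∀ a b, fxxyy a b = fxxyy b a)
    (hsym3a : ∀ a b c, fxyyy a b c = fxyyy b a c)
    (hsym3b : ∀ a b c, fxyyy a b c = fxyyy a c b)
    (hsym4a : ∀ a b c d, fyyyy a b c d = fyyyy b a c d)
    (hsym4b : ∀ a b c d, fyyyy a b c d = fyyyy a c b d)
    (hsym4c : ∀ a b c d, fyyyy a b c d = fyyyy a b d c)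
    (ξ : ℝ) (hξ : ξ ≠ 0) (η : Fin (n-1) → ℝ)
    (h1 : ξ * fxxxx + ∑ a, η a * fxxxy a = 0)
    (h2 : ∀ b, ξ * fxxxy b + ∑ a, η a * fxxyy a b = 0)
    (h3 : ∀ b c, ξ * fxxyy b c + ∑ a, η a * fxyyy a b c = 0)
    (h4 : ∀ b c d, ξ * fxyyy b c d + ∑ a, η a * fyyyy a b c d = 0)
    (h5 : ∀ Y : Fin (n-1) → ℝ, (∑ a, (Y a)^2 = 1) →
      (-(∑ a, Y a * η a) / ξ)^4 * fxxxx
      + 4 * (-(∑ a, Y a * η a) / ξ)^3 * (∑ a, Y a * fxxxy a)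
      + 6 * (-(∑ a, Y a * η a) / ξ)^2 * (∑ a, ∑ b, Y a * Y b * fxxyy a b)
      + 4 * (-(∑ a, Y a * η a) / ξ) * (∑ a, ∑ b, ∑ c, Y a * Y b * Y c * fxyyy a b c)
      + (∑ a, ∑ b, ∑ c, ∑ d, Y a * Y b * Y c * Y d * fyyyy a b c d) = 0) :
    fxxxx = 0 ∧ (∀ a, fxxxy a = 0) ∧ (∀ a b, fxxyy a b = 0)
      ∧ (∀ a b c, fxyyy a b c = 0) ∧ (∀ a b c d, fyyyy a b c d = 0) := by

  -- contraction relations in K-form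
  have hb2 : ∀ b, ∑ a, η a * fxxyy a b = -(ξ * fxxxy b) := fun b => by linarith [h2 b]
  have hb3 : ∀ b c, ∑ a, η a * fxyyy a b c = -(ξ * fxxyy b c) := fun b c => by
    linarith [h3 b c]
  have hb4 : ∀ b c d, ∑ a, η a * fyyyy a b c d = -(ξ * fxyyy b c d) := fun b c d => by
    linarith [h4 b c d]
  have R1 : K1 fxxxy η = -(ξ * fxxxx) := by unfold S0.K1; linarith [h1]
  have R2 : ∀ B, K2 fxxyy η B = -(ξ * K1 fxxxy B) := by
    intro B
    unfold S0.K2 S0.K1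
    rw [Finset.sum_comm, Finset.mul_sum, ← Finset.sum_neg_distrib]
    refine Finset.sum_congr rfl fun b _ => ?_
    have e : ∑ a, η a * B b * fxxyy a b = B b * ∑ a, η a * fxxyy a b := by
      rw [Finset.mul_sum]; exact Finset.sum_congr rfl fun a _ => by ring
    rw [e, hb2 b]; ring
  have R3 : ∀ B C, K3 fxyyy η B C = -(ξ * K2 fxxyy B C) := by
    intro B C
    unfold S0.K3 S0.K2
    rw [Finset.sum_comm, Finset.mul_sum, ← Finset.sum_neg_distrib]
    refine Finset.sum_congr rfl fun b _ => ?_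
    rw [Finset.sum_comm, Finset.mul_sum, ← Finset.sum_neg_distrib]
    refine Finset.sum_congr rfl fun c _ => ?_
    have e : ∑ a, η a * B b * C c * fxyyy a b c = B b * C c * ∑ a, η a * fxyyy a b c := by
      rw [Finset.mul_sum]; exact Finset.sum_congr rfl fun a _ => by ring
    rw [e, hb3 b c]; ring
  have R4 : ∀ B C D, K4 fyyyy η B C D = -(ξ * K3 fxyyy B C D) := by
    intro B C D
    unfold S0.K4 S0.K3
    rw [Finset.sum_comm, Finset.mul_sum, ← Finset.sum_neg_distrib]
    refine Finset.sum_congr rfl fun b _ => ?_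
    rw [Finset.sum_comm, Finset.mul_sum, ← Finset.sum_neg_distrib]
    refine Finset.sum_congr rfl fun c _ => ?_
    rw [Finset.sum_comm, Finset.mul_sum, ← Finset.sum_neg_distrib]
    refine Finset.sum_congr rfl fun d _ => ?_
    have e : ∑ a, η a * B b * C c * D d * fyyyy a b c d
        = B b * C c * D d * ∑ a, η a * fyyyy a b c d := by
      rw [Finset.mul_sum]; exact Finset.sum_congr rfl fun a _ => by ring
    rw [e, hb4 b c d]; ring
  -- Phase 0: vanishing on the hyperplane ξ w + ⟨η, Y⟩ = 0
  have hQplane : ∀ (w : ℝ) (Y : Fin (n-1) → ℝ), ξ * w + K1 η Y = 0 →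
      w^4 * fxxxx + 4*w^3 * K1 fxxxy Y + 6*w^2 * K2 fxxyy Y Y
        + 4*w * K3 fxyyy Y Y Y + K4 fyyyy Y Y Y Y = 0 := by
    intro w Y hw
    by_cases hY : ∀ i, Y i = 0
    · have hz : K1 η Y = 0 := by unfold S0.K1; simp [hY]
      have hw0 : w = 0 := by
        rw [hz, add_zero] at hw
        exact (mul_eq_zero.mp hw).resolve_left hξ
      have z4 : K4 fyyyy Y Y Y Y = 0 := by unfold S0.K4; simp [hY]
      rw [hw0, z4]; ring
    · push_neg at hY
      obtain ⟨i, hi⟩ := hY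
      have hr2 : 0 < ∑ a, (Y a)^2 :=
        Finset.sum_pos' (fun a _ => sq_nonneg _) ⟨i, Finset.mem_univ i, by positivity⟩
      set r := Real.sqrt (∑ a, (Y a)^2) with hrdef
      have hr : 0 < r := Real.sqrt_pos.mpr hr2
      have hr0 : r ≠ 0 := ne_of_gt hr
      have hrr : r^2 = ∑ a, (Y a)^2 := Real.sq_sqrt hr2.le
      have hunit : ∑ a, ((fun j => r⁻¹ * Y j) a)^2 = 1 := by
        have e : ∑ a, (r⁻¹ * Y a)^2 = r⁻¹^2 * ∑ a, (Y a)^2 := by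
          rw [Finset.mul_sum]; exact Finset.sum_congr rfl fun a _ => by ring
        simpa [e, ← hrr] using by field_simp
      have E := h5 (fun j => r⁻¹ * Y j) hunit
      have e1 : (∑ a, r⁻¹ * Y a * η a) = r⁻¹ * K1 η Y := K1_smul η Y r⁻¹
      have e2 : (∑ a, r⁻¹ * Y a * fxxxy a) = r⁻¹ * K1 fxxxy Y := K1_smul fxxxy Y r⁻¹
      have e3 : (∑ a, ∑ b, (r⁻¹ * Y a) * (r⁻¹ * Y b) * fxxyy a b)
          = r⁻¹ * r⁻¹ * K2 fxxyy Y Y := K2_smul fxxyy Y Y r⁻¹ r⁻¹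
      have e4 : (∑ a, ∑ b, ∑ c, (r⁻¹ * Y a) * (r⁻¹ * Y b) * (r⁻¹ * Y c) * fxyyy a b c)
          = r⁻¹ * r⁻¹ * r⁻¹ * K3 fxyyy Y Y Y := K3_smul fxyyy Y Y Y r⁻¹ r⁻¹ r⁻¹
      have e5 : (∑ a, ∑ b, ∑ c, ∑ d,
            (r⁻¹ * Y a) * (r⁻¹ * Y b) * (r⁻¹ * Y c) * (r⁻¹ * Y d) * fyyyy a b c d)
          = r⁻¹ * r⁻¹ * r⁻¹ * r⁻¹ * K4 fyyyy Y Y Y Y := K4_smul fyyyy Y Y Y Y r⁻¹ r⁻¹ r⁻¹ r⁻¹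
      rw [e1, e2, e3, e4, e5] at E
      have hKw : K1 η Y = -(ξ * w) := by linarith
      rw [hKw] at E
      have hdiv : -(r⁻¹ * -(ξ * w)) / ξ = r⁻¹ * w := by field_simp
      rw [hdiv] at E
      have E2 : r⁻¹^4 * (w^4 * fxxxx + 4*w^3 * K1 fxxxy Y + 6*w^2 * K2 fxxyy Y Y
          + 4*w * K3 fxyyy Y Y Y + K4 fyyyy Y Y Y Y) = 0 := by linear_combination E
      exact (mul_eq_zero.mp E2).resolve_left (pow_ne_zero 4 (inv_ne_zero hr0))
  -- Phase I: vanishing everywhere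
  have hee : (0:ℝ) ≤ K1 η η := Finset.sum_nonneg fun a _ => mul_self_nonneg _
  have hxi2 : 0 < ξ^2 := by positivity
  have hden : 0 < ξ^2 + K1 η η := by linarith
  have H1 : ∀ (w : ℝ) (Y : Fin (n-1) → ℝ),
      w^4 * fxxxx + 4*w^3 * K1 fxxxy Y + 6*w^2 * K2 fxxyy Y Y
        + 4*w * K3 fxyyy Y Y Y + K4 fyyyy Y Y Y Y = 0 := by
    intro w Y
    set c := (ξ*w + K1 η Y)/(ξ^2 + K1 η η) with hc
    have hplane : ξ * (w - c*ξ) + K1 η (fun i => Y i - c * η i) = 0 := by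
      have eK : K1 η (fun i => Y i - c * η i) = K1 η Y - c * K1 η η := by
        unfold S0.K1
        rw [Finset.mul_sum, ← Finset.sum_sub_distrib]
        exact Finset.sum_congr rfl fun a _ => by ring
      rw [eK, hc]
      field_simp
      ring
    have key := hQplane (w - c*ξ) (fun i => Y i - c * η i) hplane
    have hwid : w = (w - c*ξ) + c * ξ := by ring
    have hYid : Y = fun i => (Y i - c * η i) + c * η i := funext fun i => by ring
    rw [hwid, hYid]
    rw [K4_expand fyyyy hsym4a hsym4b hsym4c (fun i => Y i - c * η i) η c,
      K3_expand fxyyy hsym3a hsym3b (fun i => Y i - c * η i) η c,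
      K2_expand fxxyy hsym2 (fun i => Y i - c * η i) η c,
      K1_addsmul fxxxy (fun i => Y i - c * η i) η c]
    simp only [R4, R3, R2, R1]
    linear_combination key
  -- Phase II: coefficient extraction
  have hcoef := fun (Y : Fin (n-1) → ℝ) =>
    quartic_coeffs (K4 fyyyy Y Y Y Y) (4 * K3 fxyyy Y Y Y) (6 * K2 fxxyy Y Y)
      (4 * K1 fxxxy Y) fxxxx (fun t => by linear_combination H1 t Y)
  have hf0 : fxxxx = 0 := (hcoef (fun _ => 0)).2.2.2.2
  have hK1 : ∀ Y, K1 fxxxy Y = 0 := fun Y => by linarith [(hcoef Y).2.2.2.1]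
  have hK2 : ∀ Y, K2 fxxyy Y Y = 0 := fun Y => by linarith [(hcoef Y).2.2.1]
  have hK3 : ∀ Y, K3 fxyyy Y Y Y = 0 := fun Y => by linarith [(hcoef Y).2.1]
  have hK4 : ∀ Y, K4 fyyyy Y Y Y Y = 0 := fun Y => (hcoef Y).1
  exact ⟨hf0, fun a => ind1 fxxxy hK1 a, quad_zero fxxyy hsym2 hK2,
    cubic_zero fxyyy hsym3a hsym3b hK3, quartic_zero fyyyy hsym4a hsym4b hsym4c hK4⟩
end

section
/- Let $n\ge 3$, $\eta\in\mathbb{R}^{n-1}$ nonzero, and let $f=(f_{xxxx},f_{xxxy},f_{xxyy},f_{xyyy},f_{yyyy})$ be a symmetric 4-tensor decomposed as above. Suppose: (i) $\langle\hat\eta,f_{xxxy}\rangle=0$, $\iota_{\hat\eta}f_{xxyy}=0$, $\iota_{\hat\eta}f_{xyyy}=0$, $\iota_{\hat\eta}f_{yyyy}=0$, where $\hat\eta=\eta/|\eta|$; and (ii) $f_{xxxx}=0$, and for every unit vector $\hat Y$ with $\hat Y\cdot\eta=0$: $\langle\hat Y,f_{xxxy}\rangle=0$, $\langle\hat Y^{\otimes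 2},f_{xxyy}\rangle=0$, $\langle\hat Y^{\otimes 3},f_{xyyy}\rangle=0$, $\langle\hat Y^{\otimes 4},f_{yyyy}\rangle=0$. Then $f=0$. -/
/-!
Write `V = W ⊕ ℝη` with `W = η^⊥`. Contraction with `η` kills every term of the multilinear
expansion of `f(v₁, …, v_k)` that has an `η`-component, so `f` is determined by its restriction
to `W`. There `f` vanishes on the diagonal, and polarization (the coefficient of `t` in
`f(w + t z, …, w + t z) = 0` is `k f(z, w, …, w)`), applied inductively after fixing one slot,
shows that it vanishes on all of `W^k`.
-/

open Finset Function

namespace MultilinearMap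

section CommSemiring

variable {R V : Type*} [CommSemiring R] [AddCommMonoid V] [Module R V]

def IsSymmetric {ι : Type*} (M : MultilinearMap R (fun _ : ι => V) R) : Prop :=
  ∀ (σ : Equiv.Perm ι) (v : ι → V), M (v ∘ σ) = M v

theorem map_const_smul_add {ι : Type*} [Fintype ι] [DecidableEq ι]
    (M : MultilinearMap R (fun _ : ι => V) R) (w z : V) (t : R) :
    M (fun _ => t • z + w) =
      ∑ s : Finset ι, t ^ #s * M (s.piecewise (fun _ => z) (fun _ => w)) := by
  rw [show (fun _ => t • z + w) = (fun _ => t • z) + (fun _ : ι => w) from rfl, map_add_univ]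
  refine sum_congr rfl fun s _ => ?_
  have : s.piecewise (fun _ => t • z) (fun _ => w) = fun i =>
      s.piecewise (fun _ => t) (fun _ => 1) i • s.piecewise (fun _ => z) (fun _ => w) i := by
    ext i
    by_cases hi : i ∈ s <;> simp [hi]
  rw [this, map_smul_univ, prod_piecewise]
  simp

variable {n : ℕ} {M : MultilinearMap R (fun _ : Fin (n + 1) => V) R}

theorem IsSymmetric.curryLeft (hM : M.IsSymmetric) (z : V) : (M.curryLeft z).IsSymmetric := by
  intro σ v
  have : Fin.cons z (v ∘ σ) =
      (Fin.cons z v : Fin (n + 1) → V) ∘ Equiv.Perm.decomposeFin.symm (0, σ) := by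
    ext i
    cases i using Fin.cases with
    | zero => simp [Equiv.Perm.decomposeFin_symm_apply_zero]
    | succ i => simp [Equiv.Perm.decomposeFin_symm_apply_succ]
  rw [curryLeft_apply, curryLeft_apply, this, hM]

theorem IsSymmetric.apply_update_eq (hM : M.IsSymmetric) (v : Fin (n + 1) → V) (i : Fin (n + 1))
    (x : V) : M (update v i x) = M (update (v ∘ Equiv.swap 0 i) 0 x) := by
  rw [← hM (Equiv.swap 0 i), update_comp_equiv, Equiv.symm_swap, Equiv.swap_apply_right]

end CommSemiring

variable {𝕜 V : Type*} [Field 𝕜] [CharZero 𝕜] [AddCommGroup V] [Module 𝕜 V]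

theorem IsSymmetric.apply_cons_const_eq_zero {n : ℕ}
    {M : MultilinearMap 𝕜 (fun _ : Fin (n + 1) => V) 𝕜} (hM : M.IsSymmetric)
    {W : Submodule 𝕜 V} (hW : ∀ w ∈ W, M (fun _ => w) = 0) {z w : V} (hz : z ∈ W) (hw : w ∈ W) :
    M (Fin.cons z fun _ => w) = 0 := by
  set c : Finset (Fin (n + 1)) → 𝕜 := fun s => M (s.piecewise (fun _ => z) (fun _ => w))
  have hP : ∑ s, Polynomial.C (c s) * Polynomial.X ^ #s = 0 := by
    refine Polynomial.funext fun t => ?_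
    simp only [Polynomial.eval_finsetSum, Polynomial.eval_mul, Polynomial.eval_C,
      Polynomial.eval_pow, Polynomial.eval_X, Polynomial.eval_zero, mul_comm (c _)]
    rw [← map_const_smul_add]
    exact hW _ (W.add_mem (W.smul_mem t hz) hw)
  have hcoeff := congrArg (Polynomial.coeff · 1) hP
  simp only [Polynomial.finsetSum_coeff, Polynomial.coeff_C_mul_X_pow,
    Polynomial.coeff_zero] at hcoeff
  have hfilter : univ.filter (fun s : Finset (Fin (n + 1)) => 1 = #s) = powersetCard 1 univ := by
    ext s
    simp [eq_comm]
  rw [← sum_filter, hfilter, powersetCard_one, sum_map] at hcoeff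
  have hsingle : ∀ i, c {i} = M (Fin.cons z fun _ => w) := fun i => by
    simp only [c, piecewise_singleton]
    rw [hM.apply_update_eq]
    congr 1
    ext j
    cases j using Fin.cases <;> simp
  simp only [Function.Embedding.coeFn_mk, hsingle, sum_const, card_univ, Fintype.card_fin,
    nsmul_eq_mul] at hcoeff
  exact (mul_eq_zero.mp hcoeff).resolve_left (by norm_cast)

theorem IsSymmetric.eq_zero_of_ker {n : ℕ} {M : MultilinearMap 𝕜 (fun _ : Fin n => V) 𝕜}
    (hM : M.IsSymmetric) (ℓ : V →ₗ[𝕜] 𝕜) {η : V} (hη : ℓ η ≠ 0)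
    (hdiag : ∀ w, ℓ w = 0 → M (fun _ => w) = 0) (hupdate : ∀ v i, M (update v i η) = 0) :
    M = 0 := by
  induction n with
  | zero =>
    ext v
    rw [Subsingleton.elim v fun _ => 0]
    exact hdiag 0 ℓ.map_zero
  | succ n ih =>
    ext v
    rw [← Fin.cons_self_tail v, ← curryLeft_apply]
    refine congrArg (· (Fin.tail v)) (ih (hM.curryLeft (v 0)) (fun w hw => ?_) fun u i => ?_)
    · obtain ⟨z, hz, c, hzc⟩ : ∃ z, ℓ z = 0 ∧ ∃ c : 𝕜, z + c • η = v 0 :=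
        ⟨v 0 - (ℓ (v 0) / ℓ η) • η, by simp [hη], ℓ (v 0) / ℓ η, sub_add_cancel _ _⟩
      have hηw : M (Fin.cons η fun _ => w) = 0 := by
        simpa only [Fin.update_cons_zero] using hupdate (Fin.cons η fun _ => w) 0
      rw [curryLeft_apply, ← hzc, cons_add, cons_smul, hηw, smul_zero, add_zero]
      exact hM.apply_cons_const_eq_zero (W := LinearMap.ker ℓ) (fun w hw => hdiag w hw) hz hw
    · rw [curryLeft_apply, Fin.cons_update, hupdate]

end MultilinearMap

theorem invariant_of_swap_castSucc_succ {α β : Type*} {n : ℕ} {T : (Fin (n + 1) → α) → β}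
    (h : ∀ (i : Fin n) I, T (I ∘ Equiv.swap i.castSucc i.succ) = T I)
    (σ : Equiv.Perm (Fin (n + 1))) (I : Fin (n + 1) → α) : T (I ∘ σ) = T I := by
  have hσ : σ ∈ Submonoid.closure (Set.range fun i : Fin n => Equiv.swap i.castSucc i.succ) :=
    Equiv.Perm.mclosure_swap_castSucc_succ n ▸ Submonoid.mem_top σ
  induction hσ using Submonoid.closure_induction generalizing I with
  | mem _ hx => obtain ⟨i, rfl⟩ := hx; exact h i I
  | one => rfl
  | mul x y _ _ hx hy => rw [Equiv.Perm.coe_mul, ← comp_assoc, hy, hx]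

theorem sum_fun_fin_succ {α β : Type*} [Fintype α] [AddCommMonoid β] {k : ℕ}
    (g : (Fin (k + 1) → α) → β) : ∑ I, g I = ∑ a, ∑ J, g (Fin.cons a J) := by
  rw [← Fintype.sum_prod_type']
  exact (Fintype.sum_equiv (Fin.consEquiv fun _ => α) _ _ fun _ => rfl).symm

section Coordinates

variable {R : Type*} [CommSemiring R] {m k : ℕ}

def tensorForm (T : (Fin k → Fin m) → R) : MultilinearMap R (fun _ : Fin k => Fin m → R) R :=
  ∑ I, T I • (MultilinearMap.mkPiAlgebra R (Fin k) R).compLinearMap fun j => LinearMap.proj (I j)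

theorem tensorForm_apply (T : (Fin k → Fin m) → R) (v : Fin k → Fin m → R) :
    tensorForm T v = ∑ I, T I * ∏ j, v j (I j) := by
  simp [tensorForm]

theorem tensorForm_single (T : (Fin k → Fin m) → R) (I : Fin k → Fin m) :
    tensorForm T (fun j => Pi.single (I j) 1) = T I := by
  rw [tensorForm_apply, sum_eq_single I]
  · simp
  · intro J _ hJ
    obtain ⟨j, hj⟩ := Function.ne_iff.mp hJ
    rw [prod_eq_zero (mem_univ j) (by simp [hj]), mul_zero]
  · simp

theorem tensorForm_cons (T : (Fin (k + 1) → Fin m) → R) (x : Fin m → R)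
    (v : Fin k → Fin m → R) :
    tensorForm T (Fin.cons x v) = tensorForm (fun J => ∑ a, x a * T (Fin.cons a J)) v := by
  simp only [tensorForm_apply, sum_fun_fin_succ, Fin.prod_univ_succ, Fin.cons_zero,
    Fin.cons_succ, sum_mul]
  rw [sum_comm]
  exact sum_congr rfl fun J _ => sum_congr rfl fun a _ => by ring

theorem isSymmetric_tensorForm {T : (Fin k → Fin m) → R}
    (hT : ∀ (σ : Equiv.Perm (Fin k)) I, T (I ∘ σ) = T I) : (tensorForm T).IsSymmetric := by
  intro σ v
  simp only [tensorForm_apply, comp_apply]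
  refine Fintype.sum_equiv (σ.arrowCongr (Equiv.refl _)) _ _ fun I => ?_
  change _ = T (I ∘ σ.symm) * ∏ j, v j (I (σ.symm j))
  rw [hT]
  exact congrArg _ (Fintype.prod_equiv σ _ _ fun j => by simp)

end Coordinates

theorem MultilinearMap.map_const_eq_zero_of_unit {m k : ℕ}
    {M : MultilinearMap ℝ (fun _ : Fin (k + 1) => Fin m → ℝ) ℝ} {η : Fin m → ℝ}
    (h : ∀ Y : Fin m → ℝ, ∑ a, Y a ^ 2 = 1 → ∑ a, Y a * η a = 0 → M (fun _ => Y) = 0)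
    (Y : Fin m → ℝ) (hY : ∑ a, Y a * η a = 0) : M (fun _ => Y) = 0 := by
  rcases eq_or_ne Y 0 with rfl | hY0
  · exact M.map_coord_zero 0 rfl
  have hpos : 0 < ∑ a, Y a ^ 2 := by
    refine lt_of_le_of_ne (sum_nonneg fun a _ => sq_nonneg _) fun h0 => hY0 (funext fun a => ?_)
    simpa using (sum_eq_zero_iff_of_nonneg fun a _ => sq_nonneg (Y a)).1 h0.symm a
  set s := √(∑ a, Y a ^ 2)
  have hs : 0 < s := Real.sqrt_pos.2 hpos
  have hYs : (fun _ : Fin (k + 1) => Y) = fun _ => s • (s⁻¹ • Y) := by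
    rw [smul_smul, mul_inv_cancel₀ hs.ne', one_smul]
  rw [hYs, M.map_smul_univ (fun _ => s), h, smul_zero]
  · simp only [Pi.smul_apply, smul_eq_mul, mul_pow, ← mul_sum, inv_pow, s,
      Real.sq_sqrt hpos.le, inv_mul_cancel₀ hpos.ne']
  · simp only [Pi.smul_apply, smul_eq_mul, mul_assoc, ← mul_sum, hY, mul_zero]

theorem tensor_eq_zero_of_perp {m k : ℕ} {T : (Fin (k + 1) → Fin m) → ℝ}
    (hT : ∀ (σ : Equiv.Perm (Fin (k + 1))) I, T (I ∘ σ) = T I) {η : Fin m → ℝ} (hη : η ≠ 0)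
    (hcontr : ∀ J, ∑ a, η a * T (Fin.cons a J) = 0)
    (hdiag : ∀ Y : Fin m → ℝ, ∑ a, Y a ^ 2 = 1 → ∑ a, Y a * η a = 0 →
      tensorForm T (fun _ => Y) = 0) : T = 0 := by
  have hM := isSymmetric_tensorForm hT
  have hcons : ∀ v, tensorForm T (Fin.cons η v) = 0 := fun v => by
    rw [tensorForm_cons]
    simp only [hcontr, tensorForm_apply, zero_mul, sum_const_zero]
  have hM0 : tensorForm T = 0 := by
    refine hM.eq_zero_of_ker (dotProductEquiv ℝ (Fin m) η) (η := η)
      (by simpa [dotProduct_self_eq_zero] using hη)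
      (fun w hw => MultilinearMap.map_const_eq_zero_of_unit hdiag w ?_) fun v i => ?_
    · simpa [dotProduct, mul_comm] using hw
    · rw [hM.apply_update_eq, ← Fin.cons_self_tail (update (v ∘ Equiv.swap 0 i) 0 η), update_self,
        Fin.tail_update_zero, hcons]
  funext I
  rw [← tensorForm_single T I, hM0]
  rfl

section Curried

variable {m : ℕ} {η : Fin m → ℝ}

theorem vector_eq_zero_of_perp {f : Fin m → ℝ} (hη : η ≠ 0) (hc : ∑ a, η a * f a = 0)
    (hd : ∀ Y : Fin m → ℝ, ∑ a, Y a ^ 2 = 1 → ∑ a, Y a * η a = 0 → ∑ a, Y a * f a = 0)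
    (a : Fin m) : f a = 0 := by
  let T : (Fin 1 → Fin m) → ℝ := fun I => f (I 0)
  have hT := invariant_of_swap_castSucc_succ (T := T) finZeroElim
  refine congrFun (tensor_eq_zero_of_perp (T := T) hT hη (fun _ => hc)
    fun Y hY hYη => ?_) ![a]
  rw [← hd Y hY hYη, tensorForm_apply]
  simp only [sum_fun_fin_succ, Fintype.sum_unique]
  refine sum_congr rfl fun a _ => ?_
  change f a * (Y a * 1) = _
  ring

theorem matrix_eq_zero_of_perp {f : Fin m → Fin m → ℝ} (hs : ∀ a b, f a b = f b a)
    (hη : η ≠ 0) (hc : ∀ b, ∑ a, η a * f a b = 0)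
    (hd : ∀ Y : Fin m → ℝ, ∑ a, Y a ^ 2 = 1 → ∑ a, Y a * η a = 0 →
      ∑ a, ∑ b, Y a * Y b * f a b = 0)
    (a b : Fin m) : f a b = 0 := by
  let T : (Fin 2 → Fin m) → ℝ := fun I => f (I 0) (I 1)
  have hT := invariant_of_swap_castSucc_succ (T := T) fun i I => by
    fin_cases i
    exact (hs ..).symm
  refine congrFun (tensor_eq_zero_of_perp (T := T) hT hη (fun _ => hc _)
    fun Y hY hYη => ?_) ![a, b]
  rw [← hd Y hY hYη, tensorForm_apply]
  simp only [sum_fun_fin_succ, Fintype.sum_unique]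
  refine sum_congr rfl fun a _ => sum_congr rfl fun b _ => ?_
  change f a b * (Y a * (Y b * 1)) = _
  ring

theorem tensor3_eq_zero_of_perp {f : Fin m → Fin m → Fin m → ℝ}
    (hsa : ∀ a b c, f a b c = f b a c) (hsb : ∀ a b c, f a b c = f a c b)
    (hη : η ≠ 0) (hc : ∀ b c, ∑ a, η a * f a b c = 0)
    (hd : ∀ Y : Fin m → ℝ, ∑ a, Y a ^ 2 = 1 → ∑ a, Y a * η a = 0 →
      ∑ a, ∑ b, ∑ c, Y a * Y b * Y c * f a b c = 0)
    (a b c : Fin m) : f a b c = 0 := by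
  let T : (Fin 3 → Fin m) → ℝ := fun I => f (I 0) (I 1) (I 2)
  have hT := invariant_of_swap_castSucc_succ (T := T) fun i I => by
    fin_cases i <;> simp [T, Equiv.swap_apply_of_ne_of_ne]
    exacts [(hsa ..).symm, (hsb ..).symm]
  refine congrFun (tensor_eq_zero_of_perp (T := T) hT hη (fun _ => hc _ _)
    fun Y hY hYη => ?_) ![a, b, c]
  rw [← hd Y hY hYη, tensorForm_apply]
  simp only [sum_fun_fin_succ, Fintype.sum_unique]
  refine sum_congr rfl fun a _ => sum_congr rfl fun b _ => sum_congr rfl fun c _ => ?_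
  change f a b c * (Y a * (Y b * (Y c * 1))) = _
  ring

theorem tensor4_eq_zero_of_perp {f : Fin m → Fin m → Fin m → Fin m → ℝ}
    (hsa : ∀ a b c d, f a b c d = f b a c d) (hsb : ∀ a b c d, f a b c d = f a c b d)
    (hsc : ∀ a b c d, f a b c d = f a b d c)
    (hη : η ≠ 0) (hc : ∀ b c d, ∑ a, η a * f a b c d = 0)
    (hd : ∀ Y : Fin m → ℝ, ∑ a, Y a ^ 2 = 1 → ∑ a, Y a * η a = 0 →
      ∑ a, ∑ b, ∑ c, ∑ d, Y a * Y b * Y c * Y d * f a b c d = 0)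
    (a b c d : Fin m) : f a b c d = 0 := by
  let T : (Fin 4 → Fin m) → ℝ := fun I => f (I 0) (I 1) (I 2) (I 3)
  have hT := invariant_of_swap_castSucc_succ (T := T) fun i I => by
    fin_cases i <;> simp [T, Equiv.swap_apply_of_ne_of_ne]
    exacts [(hsa ..).symm, (hsb ..).symm, (hsc ..).symm]
  refine congrFun (tensor_eq_zero_of_perp (T := T) hT hη (fun _ => hc _ _ _)
    fun Y hY hYη => ?_) ![a, b, c, d]
  rw [← hd Y hY hYη, tensorForm_apply]
  simp only [sum_fun_fin_succ, Fintype.sum_unique]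
  refine sum_congr rfl fun a _ => sum_congr rfl fun b _ => sum_congr rfl fun c _ =>
    sum_congr rfl fun d _ => ?_
  change f a b c d * (Y a * (Y b * (Y c * (Y d * 1)))) = _
  ring

end Curried

theorem stmt_1_general (n : ℕ)
    (fxxxx : ℝ) (fxxxy : Fin (n-1) → ℝ)
    (fxxyy : Fin (n-1) → Fin (n-1) → ℝ)
    (fxyyy : Fin (n-1) → Fin (n-1) → Fin (n-1) → ℝ)
    (fyyyy : Fin (n-1) → Fin (n-1) → Fin (n-1) → Fin (n-1) → ℝ)
    (hsym2 : ∀ a b, fxxyy a b = fxxyy b a)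
    (hsym3a : ∀ a b c, fxyyy a b c = fxyyy b a c)
    (hsym3b : ∀ a b c, fxyyy a b c = fxyyy a c b)
    (hsym4a : ∀ a b c d, fyyyy a b c d = fyyyy b a c d)
    (hsym4b : ∀ a b c d, fyyyy a b c d = fyyyy a c b d)
    (hsym4c : ∀ a b c d, fyyyy a b c d = fyyyy a b d c)
    (η : Fin (n-1) → ℝ) (hη : η ≠ 0)
    (h1 : ∑ a, η a * fxxxy a = 0)
    (h2 : ∀ b, ∑ a, η a * fxxyy a b = 0)
    (h3 : ∀ b c, ∑ a, η a * fxyyy a b c = 0)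
    (h4 : ∀ b c d, ∑ a, η a * fyyyy a b c d = 0)
    (h0 : fxxxx = 0)
    (h5 : ∀ Y : Fin (n-1) → ℝ, (∑ a, (Y a)^2 = 1) → (∑ a, Y a * η a = 0) →
      (∑ a, Y a * fxxxy a = 0)
      ∧ (∑ a, ∑ b, Y a * Y b * fxxyy a b = 0)
      ∧ (∑ a, ∑ b, ∑ c, Y a * Y b * Y c * fxyyy a b c = 0)
      ∧ (∑ a, ∑ b, ∑ c, ∑ d, Y a * Y b * Y c * Y d * fyyyy a b c d = 0)) :
    fxxxx = 0 ∧ (∀ a, fxxxy a = 0) ∧ (∀ a b, fxxyy a b = 0)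
      ∧ (∀ a b c, fxyyy a b c = 0) ∧ (∀ a b c d, fyyyy a b c d = 0) :=
  ⟨h0, vector_eq_zero_of_perp hη h1 fun Y hY hYη => (h5 Y hY hYη).1,
    matrix_eq_zero_of_perp hsym2 hη h2 fun Y hY hYη => (h5 Y hY hYη).2.1,
    tensor3_eq_zero_of_perp hsym3a hsym3b hη h3 fun Y hY hYη => (h5 Y hY hYη).2.2.1,
    tensor4_eq_zero_of_perp hsym4a hsym4b hsym4c hη h4 fun Y hY hYη => (h5 Y hY hYη).2.2.2⟩

/-- Case 2 (ξ = 0) ellipticity computation at fiber infinity for the local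
geodesic ray transform of symmetric 4-tensors (Lemma 2.2). -/
theorem stmt_1 (n : ℕ) (hn : 3 ≤ n)
    (fxxxx : ℝ) (fxxxy : Fin (n-1) → ℝ)
    (fxxyy : Fin (n-1) → Fin (n-1) → ℝ)
    (fxyyy : Fin (n-1) → Fin (n-1) → Fin (n-1) → ℝ)
    (fyyyy : Fin (n-1) → Fin (n-1) → Fin (n-1) → Fin (n-1) → ℝ)
    (hsym2 : ∀ a b, fxxyy a b = fxxyy b a)
    (hsym3a : ∀ a b c, fxyyy a b c = fxyyy b a c)
    (hsym3b : ∀ a b c, fxyyy a b c = fxyyy a c b)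
    (hsym4a : ∀ a b c d, fyyyy a b c d = fyyyy b a c d)
    (hsym4b : ∀ a b c d, fyyyy a b c d = fyyyy a c b d)
    (hsym4c : ∀ a b c d, fyyyy a b c d = fyyyy a b d c)
    (η : Fin (n-1) → ℝ) (hη : η ≠ 0)
    (h1 : ∑ a, η a * fxxxy a = 0)
    (h2 : ∀ b, ∑ a, η a * fxxyy a b = 0)
    (h3 : ∀ b c, ∑ a, η a * fxyyy a b c = 0)
    (h4 : ∀ b c d, ∑ a, η a * fyyyy a b c d = 0)
    (h0 : fxxxx = 0)
    (h5 : ∀ Y : Fin (n-1) → ℝ, (∑ a, (Y a)^2 = 1) → (∑ a, Y a * η a = 0) →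
      (∑ a, Y a * fxxxy a = 0)
      ∧ (∑ a, ∑ b, Y a * Y b * fxxyy a b = 0)
      ∧ (∑ a, ∑ b, ∑ c, Y a * Y b * Y c * fxyyy a b c = 0)
      ∧ (∑ a, ∑ b, ∑ c, ∑ d, Y a * Y b * Y c * Y d * fyyyy a b c d = 0)) :
    fxxxx = 0 ∧ (∀ a, fxxxy a = 0) ∧ (∀ a b, fxxyy a b = 0)
      ∧ (∀ a b c, fxyyy a b c = 0) ∧ (∀ a b c d, fyyyy a b c d = 0) :=
  stmt_1_general n fxxxx fxxxy fxxyy fxyyy fyyyy hsym2 hsym3a hsym3b hsym4a hsym4b hsym4c η hη h1 h2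
    h3 h4 h0 h5
end

section
/- Let $V$ be a real inner product space of dimension $\ge 2$, let $\hat\eta\in V$ be a unit vector, and let $T$ be a symmetric 4-tensor on $V$. Suppose that for all unit vectors $w$ orthogonal to $\hat\eta$, $T$ is orthogonal (under full contraction) to each of $w^{\otimes 4}$, $\hat\eta\otimes_s w^{\otimes 3}$, $\hat\eta^{\otimes 2}\otimes_s w^{\otimes 2}$, $\hat\eta^{\otimes 3}\otimes_s w$, and $\hat\eta^{\otimes 4}$. Then $T=0$. -/
open RealInnerProductSpace

/-- Final step of Lemmas 2.2 and 2.3: a symmetric 4-tensor orthogonal (under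
full contraction) to `w^{⊗4}`, `η̂ ⊗_s w^{⊗3}`, `η̂^{⊗2} ⊗_s w^{⊗2}`,
`η̂^{⊗3} ⊗_s w` and `η̂^{⊗4}` for every unit vector `w ⊥ η̂` vanishes. -/
theorem stmt_3 {V : Type*} [NormedAddCommGroup V] [InnerProductSpace ℝ V]
    (hV : 2 ≤ Module.rank ℝ V)
    (ηhat : V) (hη : ‖ηhat‖ = 1)
    (T : MultilinearMap ℝ (fun _ : Fin 4 => V) ℝ)
    (hsym : ∀ (σ : Equiv.Perm (Fin 4)) (x : Fin 4 → V), T (x ∘ σ) = T x)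
    (hw : ∀ w : V, ‖w‖ = 1 → ⟪ηhat, w⟫ = 0 →
      T ![w, w, w, w] = 0 ∧ T ![ηhat, w, w, w] = 0 ∧
      T ![ηhat, ηhat, w, w] = 0 ∧ T ![ηhat, ηhat, ηhat, w] = 0)
    (hη4 : T ![ηhat, ηhat, ηhat, ηhat] = 0) : T = 0 := by
  have rot : ∀ a b c d : V, T ![a,b,c,d] = T ![b,c,d,a] := by
    intro a b c d
    have h := hsym (finRotate 4) ![a,b,c,d]
    have hc : (![a,b,c,d] ∘ (finRotate 4)) = ![b,c,d,a] := by
      funext i; fin_cases i <;> rfl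
    rw [hc] at h; exact h.symm
  have swap01 : ∀ a b c d : V, T ![a,b,c,d] = T ![b,a,c,d] := by
    intro a b c d
    have h := hsym (Equiv.swap 0 1) ![a,b,c,d]
    have hc : (![a,b,c,d] ∘ (Equiv.swap (0:Fin 4) 1)) = ![b,a,c,d] := by
      funext i; fin_cases i <;> rfl
    rw [hc] at h; exact h.symm
  have swap23 : ∀ a b c d : V, T ![a,b,c,d] = T ![a,b,d,c] := by
    intro a b c d
    have h := hsym (Equiv.swap 2 3) ![a,b,c,d]
    have hc : (![a,b,c,d] ∘ (Equiv.swap (2:Fin 4) 3)) = ![a,b,d,c] := by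
      funext i; fin_cases i <;> rfl
    rw [hc] at h; exact h.symm
  -- linearity in each slot
  have L1 : ∀ (u v p q r : V), T ![u+v,p,q,r] = T ![u,p,q,r] + T ![v,p,q,r] := fun u v p q r =>
    MultilinearMap.cons_add T ![p,q,r] u v
  have S1 : ∀ (t : ℝ) (u p q r : V), T ![t•u,p,q,r] = t * T ![u,p,q,r] := fun t u p q r =>
    MultilinearMap.cons_smul T ![p,q,r] t u
  have L2 : ∀ (p u v q r : V), T ![p,u+v,q,r] = T ![p,u,q,r] + T ![p,v,q,r] := by
    intro p u v q r
    rw [rot p (u+v) q r, L1, ← rot p u q r, ← rot p v q r]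
  have S2 : ∀ (t : ℝ) (p u q r : V), T ![p,t•u,q,r] = t * T ![p,u,q,r] := by
    intro t p u q r
    rw [rot p (t•u) q r, S1, ← rot p u q r]
  have L3 : ∀ (p q u v r : V), T ![p,q,u+v,r] = T ![p,q,u,r] + T ![p,q,v,r] := by
    intro p q u v r
    rw [rot p q (u+v) r, L2, ← rot p q u r, ← rot p q v r]
  have S3 : ∀ (t : ℝ) (p q u r : V), T ![p,q,t•u,r] = t * T ![p,q,u,r] := by
    intro t p q u r
    rw [rot p q (t•u) r, S2, ← rot p q u r]
  have L4 : ∀ (p q r u v : V), T ![p,q,r,u+v] = T ![p,q,r,u] + T ![p,q,r,v] := by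
    intro p q r u v
    rw [rot p q r (u+v), L3, ← rot p q r u, ← rot p q r v]
  have S4 : ∀ (t : ℝ) (p q r u : V), T ![p,q,r,t•u] = t * T ![p,q,r,u] := by
    intro t p q r u
    rw [rot p q r (t•u), S3, ← rot p q r u]
  -- master expansion
  have expand2 : ∀ (a b : ℝ) (u v : V),
      T ![a•u+b•v, a•u+b•v, a•u+b•v, a•u+b•v] =
        a^4 * T ![u,u,u,u] + 4*a^3*b * T ![u,u,u,v] + 6*a^2*b^2 * T ![u,u,v,v]
          + 4*a*b^3 * T ![u,v,v,v] + b^4 * T ![v,v,v,v] := by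
    intro a b u v
    simp only [L1, L2, L3, L4, S1, S2, S3, S4]
    have c1 : T ![v,u,u,u] = T ![u,u,u,v] := by rw [rot]
    have c2 : T ![u,v,u,u] = T ![u,u,u,v] := by rw [rot, rot]
    have c3 : T ![u,u,v,u] = T ![u,u,u,v] := by rw [rot, rot, rot]
    have c4 : T ![v,v,u,u] = T ![u,u,v,v] := by rw [rot, rot]
    have c5 : T ![v,u,v,u] = T ![u,u,v,v] := by rw [swap01, rot, rot, rot]
    have c6 : T ![v,u,u,v] = T ![u,u,v,v] := by rw [rot]
    have c7 : T ![u,v,v,u] = T ![u,u,v,v] := by rw [rot, rot, rot]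
    have c8 : T ![u,v,u,v] = T ![u,u,v,v] := by rw [swap01 u v u v, rot]
    have c9 : T ![v,v,v,u] = T ![u,v,v,v] := by rw [rot, rot, rot]
    have c10 : T ![v,v,u,v] = T ![u,v,v,v] := by rw [rot, rot]
    have c11 : T ![v,u,v,v] = T ![u,v,v,v] := by rw [rot]
    rw [c1, c2, c3, c4, c5, c6, c7, c8, c9, c10, c11]
    ring
  -- diagonal vanishes
  have diag : ∀ x : V, T ![x,x,x,x] = 0 := by
    intro x
    set c : ℝ := ⟪ηhat, x⟫ with hc
    set v : V := x - c • ηhat with hv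
    have hηη : ⟪ηhat, ηhat⟫ = (1:ℝ) := by
      rw [real_inner_self_eq_norm_sq, hη]; norm_num
    have hov : ⟪ηhat, v⟫ = 0 := by
      rw [hv, inner_sub_right, real_inner_smul_right, hηη]
      ring
    have hx : x = c • ηhat + v := by rw [hv]; abel
    by_cases h0 : v = 0
    · have : x = c • ηhat + (0:ℝ) • ηhat := by rw [hx, h0]; simp
      rw [this, expand2, hη4]
      ring
    · set w : V := ‖v‖⁻¹ • v with hwdef
      have hvn : ‖v‖ ≠ 0 := norm_ne_zero_iff.mpr h0
      have hw1 : ‖w‖ = 1 := by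
        rw [hwdef, norm_smul]
        simp [hvn]
      have how : ⟪ηhat, w⟫ = 0 := by
        rw [hwdef, real_inner_smul_right, hov]; ring
      have hvw : v = ‖v‖ • w := by
        rw [hwdef, smul_smul, mul_inv_cancel₀ hvn, one_smul]
      obtain ⟨z4, z3, z2, z1⟩ := hw w hw1 how
      have hx' : x = c • ηhat + ‖v‖ • w := by rw [hx, ← hvw]
      rw [hx', expand2, hη4, z4, z3, z2, z1]
      ring
  -- from diagonal: T![x,x,y,y] = 0
  have C0 : ∀ x y : V, T ![x,x,y,y] = 0 := by
    intro x y
    have e1 := diag (x + y)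
    have e2 := diag (x + (-1:ℝ) • y)
    have hx1 : x + y = (1:ℝ) • x + (1:ℝ) • y := by simp
    have hx2 : x + (-1:ℝ) • y = (1:ℝ) • x + (-1:ℝ) • y := by simp
    rw [hx1, expand2] at e1
    rw [hx2, expand2] at e2
    have dx := diag x
    have dy := diag y
    nlinarith [e1, e2, dx, dy]
  have M : ∀ x z y : V, T ![x,z,y,y] = 0 := by
    intro x z y
    have e := C0 (x + z) y
    simp only [L1, L2] at e
    rw [C0 x y, C0 z y, swap01 z x y y] at e
    linarith
  have F : ∀ x z y w : V, T ![x,z,y,w] = 0 := by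
    intro x z y w
    have e := M x z (y + w)
    simp only [L3, L4] at e
    rw [M x z y, M x z w, swap23 x z w y] at e
    linarith
  ext m
  have hm : m = ![m 0, m 1, m 2, m 3] := by
    funext i; fin_cases i <;> rfl
  show T m = 0
  rw [hm, F]
end

section
/- Let $c:(0,R]\to(0,\infty)$ be smooth with $\frac{d}{dr}\big(\frac{r}{c(r)}\big) > 0$ for all $r\in(0,R]$ (the Herglotz condition). Consider the radial Riemannian metric $g = c(|x|)^{-2}\,ds^2$ on the annulus $\{a\le |x|\le R\}\subset\mathbb{R}^n$, $n\ge 2$. Then each Euclidean sphere $\{|x|=r\}$, $a\le r\le R$, is strictly convex with respect to $g$ when viewed from $\{|x|>r\}$. -/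
/-!
Along a curve `γ`, `(‖γ‖²)'' = 2 (⟪γ, γ''⟫ + ‖γ'‖²)`. At a point where `γ` is tangent to the
sphere of radius `r`, the geodesic equation of `c(|x|)⁻² ds²` gives `⟪γ, γ''⟫ = -‖γ'‖² r c'(r) / c(r)`,
so `(‖γ‖²)'' = 2 ‖γ'‖² (c(r) - r c'(r)) / c(r)`, and `c - r c' = c² (r / c)'` is positive by the
Herglotz condition.
-/

open RealInnerProductSpace

variable {E : Type*} [NormedAddCommGroup E] [InnerProductSpace ℝ E]

/-- `γ'' = radialConformalGeodesicAccel κ γ γ'` is the geodesic equation of the conformal metric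
`e^{2φ(|x|)} ds²`, with `κ = φ'(|x|)`. -/
noncomputable def radialConformalGeodesicAccel (κ : ℝ) (x v : E) : E :=
  (‖v‖ ^ 2 * κ) • (‖x‖⁻¹ • x) - (2 * κ * ⟪‖x‖⁻¹ • x, v⟫) • v

theorem inner_radialConformalGeodesicAccel_of_inner_eq_zero (κ : ℝ) {x v : E}
    (hxv : ⟪x, v⟫ = 0) : ⟪x, radialConformalGeodesicAccel κ x v⟫ = ‖v‖ ^ 2 * κ * ‖x‖ := by
  obtain rfl | hx := eq_or_ne x 0
  · simp
  have : ‖x‖ ≠ 0 := norm_ne_zero_iff.mpr hx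
  simp only [radialConformalGeodesicAccel, inner_sub_right, real_inner_smul_right,
    real_inner_smul_left, real_inner_self_eq_norm_sq, hxv]
  field_simp
  ring

theorem deriv_deriv_norm_sq {γ : ℝ → E} (hγ : Differentiable ℝ γ) {t : ℝ}
    (hγ' : DifferentiableAt ℝ (deriv γ) t) :
    deriv (deriv fun s => ‖γ s‖ ^ 2) t = 2 * (⟪γ t, deriv (deriv γ) t⟫ + ‖deriv γ t‖ ^ 2) := by
  have hfirst : deriv (fun s => ‖γ s‖ ^ 2) = fun s => 2 * ⟪γ s, deriv γ s⟫ :=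
    funext fun s => (hγ s).hasDerivAt.norm_sq.deriv
  rw [hfirst, ← real_inner_self_eq_norm_sq]
  convert (((hγ t).hasDerivAt.inner ℝ hγ'.hasDerivAt).const_mul (2 : ℝ)).deriv using 3

theorem deriv_deriv_norm_sq_of_radialConformalGeodesic {γ : ℝ → E} (hγ : ContDiff ℝ 2 γ)
    {κ : ℝ} {t : ℝ}
    (hgeo : deriv (deriv γ) t = radialConformalGeodesicAccel κ (γ t) (deriv γ t))
    (htang : ⟪γ t, deriv γ t⟫ = 0) :
    deriv (deriv fun s => ‖γ s‖ ^ 2) t = 2 * ‖deriv γ t‖ ^ 2 * (1 + κ * ‖γ t‖) := by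
  have hγ' : ContDiff ℝ 1 (deriv γ) := (contDiff_succ_iff_deriv.mp hγ).2.2
  rw [deriv_deriv_norm_sq (hγ.differentiable two_ne_zero) (hγ'.differentiable one_ne_zero t),
    hgeo, inner_radialConformalGeodesicAccel_of_inner_eq_zero κ htang]
  ring

theorem sub_mul_deriv_pos_of_deriv_div_pos {c : ℝ → ℝ} {r : ℝ} (hc : DifferentiableAt ℝ c r)
    (hcr : c r ≠ 0) (h : 0 < deriv (fun s => s / c s) r) : 0 < c r - r * deriv c r := by
  rw [deriv_fun_div differentiableAt_fun_id hc hcr, deriv_id'', one_mul] at h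
  exact (div_pos_iff_of_pos_right (by positivity)).mp h

theorem stmt_9_general (n : ℕ) (a R : ℝ) (ha : 0 < a)
    (c : ℝ → ℝ) (hc : ContDiff ℝ 1 c)
    (hcpos : ∀ r ∈ Set.Ioc (0:ℝ) R, 0 < c r)
    (herglotz : ∀ r ∈ Set.Ioc (0:ℝ) R, 0 < deriv (fun s => s / c s) r)
    (γ : ℝ → EuclideanSpace ℝ (Fin n)) (hγ : ContDiff ℝ 2 γ)
    -- geodesic equation for the conformal metric `e^{2φ}δ`, `φ = -log c(|x|)`,
    -- with gradient of `φ` equal to `(-c'(|x|)/c(|x|)) • (|x|⁻¹ • x)`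
    (hgeo : ∀ t : ℝ, a ≤ ‖γ t‖ → ‖γ t‖ ≤ R →
      deriv (deriv γ) t =
        (‖deriv γ t‖ ^ 2 * (-(deriv c ‖γ t‖) / c ‖γ t‖)) • (‖γ t‖⁻¹ • γ t)
        - (2 * (-(deriv c ‖γ t‖) / c ‖γ t‖) * ⟪‖γ t‖⁻¹ • γ t, deriv γ t⟫) • deriv γ t)
    (r : ℝ) (har : a ≤ r) (hrR : r ≤ R)
    (h0 : ‖γ 0‖ = r) (htang : ⟪γ 0, deriv γ 0⟫ = 0)
    (hv : deriv γ 0 ≠ 0) :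
    0 < deriv (deriv fun t => ‖γ t‖ ^ 2) 0 := by
  have hr : r ∈ Set.Ioc (0:ℝ) R := ⟨ha.trans_le har, hrR⟩
  have hcr : 0 < c r := hcpos r hr
  have hconvex : 0 < c r - r * deriv c r :=
    sub_mul_deriv_pos_of_deriv_div_pos (hc.differentiable one_ne_zero r) hcr.ne' (herglotz r hr)
  have hgeo0 := hgeo 0 (h0 ▸ har) (h0 ▸ hrR)
  rw [deriv_deriv_norm_sq_of_radialConformalGeodesic hγ hgeo0 htang, h0]
  have hfactor : 1 + -deriv c r / c r * r = (c r - r * deriv c r) / c r := by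
    field_simp
    ring
  rw [hfactor]
  have := norm_pos_iff.mpr hv
  positivity

/-- Herglotz condition implies strict convexity of the Euclidean spheres for the
conformal metric `g = c(|x|)⁻² ds²`: any nontrivial geodesic of `g` tangent to
the sphere `{|x| = r}` at `t = 0` satisfies `(d²/dt²)|γ(t)|² > 0` at `t = 0`,
i.e. it stays locally outside the sphere. -/
theorem stmt_9 (n : ℕ) (hn : 2 ≤ n) (a R : ℝ) (ha : 0 < a) (haR : a ≤ R)
    (c : ℝ → ℝ) (hc : ContDiff ℝ 1 c)
    (hcpos : ∀ r ∈ Set.Ioc (0:ℝ) R, 0 < c r)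
    (herglotz : ∀ r ∈ Set.Ioc (0:ℝ) R, 0 < deriv (fun s => s / c s) r)
    (γ : ℝ → EuclideanSpace ℝ (Fin n)) (hγ : ContDiff ℝ 2 γ)
    -- geodesic equation for the conformal metric `e^{2φ}δ`, `φ = -log c(|x|)`,
    -- with gradient of `φ` equal to `(-c'(|x|)/c(|x|)) • (|x|⁻¹ • x)`
    (hgeo : ∀ t : ℝ, a ≤ ‖γ t‖ → ‖γ t‖ ≤ R →
      deriv (deriv γ) t =
        (‖deriv γ t‖ ^ 2 * (-(deriv c ‖γ t‖) / c ‖γ t‖)) • (‖γ t‖⁻¹ • γ t)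
        - (2 * (-(deriv c ‖γ t‖) / c ‖γ t‖) * ⟪‖γ t‖⁻¹ • γ t, deriv γ t⟫) • deriv γ t)
    (r : ℝ) (har : a ≤ r) (hrR : r ≤ R)
    (h0 : ‖γ 0‖ = r) (htang : ⟪γ 0, deriv γ 0⟫ = 0)
    (hv : deriv γ 0 ≠ 0) :
    0 < deriv (deriv fun t => ‖γ t‖ ^ 2) 0 :=
  stmt_9_general n a R ha c hc hcpos herglotz γ hγ hgeo r har hrR h0 htang hv
end
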